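/- arXiv:1711.00420 — 2 statements merged into one kernel-verified Lean document; each statement's English description precedes it below -/
import Mathlib

section
/- ε-insertion and ε-extraction are mutually inverse: for a semistandard (X,λ)-tableau T, (a) T = ((T ←ε x) →ε a) where a is the added node of the insertion, for every x ∈ X; (b) T = ((T →ε u) ←ε y) where y is the extracted letter, for every removable node u of [λ]. -/
/-!
Insertion followed by extraction at the added node retraces the bumping path backwards, and
insertion of the extracted letter retraces the unbumping path forwards. Each step locates a node
on a line: the node of the other path qualifies for the comparison, and no node past it in the
direction of the search does. For a node off the path this is semistandardness, equality being
ruled out by the parity condition on repeated letters in a row or column; for a node on the path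
it is monotonicity of the bumped letters, together with the fact that a run of equal bumped
letters moves to a new line at every step. Extraction followed by insertion also needs the
extraction to start at a corner, so that its initial node lies past no node carrying an entry.
-/

namespace SuperRSK

variable {X Y : Type*}

/-- The super order `≺` on a superalphabet: `a ≺ b` iff (`a` odd, `b` even), or
(both even and `a < b`), or (both odd and `a > b`). Odd means parity `true`. -/
def SuperPrec [LinearOrder X] (par : X → Bool) (a b : X) : Prop :=
  (par a = true ∧ par b = false) ∨
  (par a = false ∧ par b = false ∧ a < b) ∨
  (par a = true ∧ par b = true ∧ b < a)

/-- The `δ`-coordinate of a node: row if `δ = false`, column if `δ = true`. -/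
def coord (δ : Bool) (u : ℕ × ℕ) : ℕ := if δ then u.2 else u.1

/-- A tableau is a function `ℕ × ℕ → WithTop X`, equal to `⊤` outside its diagram.
Semistandard: the support is a Young diagram and entries are non-decreasing
(both encoded by monotonicity into `WithTop X`), equal entries in a row are even,
and equal entries in a column are odd. -/
def IsSStd [LinearOrder X] (par : X → Bool) (T : ℕ × ℕ → WithTop X) : Prop :=
  (∀ u v : ℕ × ℕ, u.1 ≤ v.1 → u.2 ≤ v.2 → T u ≤ T v) ∧
  (∀ u v : ℕ × ℕ, ∀ a : X, u.1 = v.1 → u.2 < v.2 → T u = (a : WithTop X) →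
    T v = (a : WithTop X) → par a = false) ∧
  (∀ u v : ℕ × ℕ, ∀ a : X, u.2 = v.2 → u.1 < v.1 → T u = (a : WithTop X) →
    T v = (a : WithTop X) → par a = true)

/-- A standard tableau: semistandard with no repeated letters. -/
def IsStd [LinearOrder X] (par : X → Bool) (T : ℕ × ℕ → WithTop X) : Prop :=
  IsSStd par T ∧
  ∀ u v : ℕ × ℕ, ∀ a : X, T u = (a : WithTop X) → T v = (a : WithTop X) → u = v

/-- The comparison used in `ε`-insertion: strict for `ε = false`, weak for `ε = true`. -/
def cmpIns [LinearOrder X] (ε : Bool) (x : X) (v : WithTop X) : Prop :=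
  if ε then (x : WithTop X) ≤ v else (x : WithTop X) < v

/-- The comparison used in `ε`-extraction: strict for `ε = false`, weak for `ε = true`. -/
def cmpExt [LinearOrder X] (ε : Bool) (y : X) (v : WithTop X) : Prop :=
  if ε then v ≤ (y : WithTop X) else v < (y : WithTop X)

/-- `BumpSeq ε par T x b xs m` says `b 0, …, b (m-1)` is the bumped node sequence and
`xs 0, …, xs (m-1)` the bumped letter sequence for the `ε`-insertion of `x` into `T`:
`xs 0 = x`; at step `j` the current letter `xs j` is placed at the smallest node `b j`
of the `i`-th row (if `ε + parity (xs j) = 0`) or column (if `= 1`) satisfying the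
`ε`-comparison, where `i = 0` at the start and afterwards is one more than the
corresponding coordinate of the previous bumped node; the bumped letter becomes the
next inserted letter, until an empty node (`⊤`) is reached. -/
def BumpSeq [LinearOrder X] (ε : Bool) (par : X → Bool) (T : ℕ × ℕ → WithTop X)
    (x : X) (b : ℕ → ℕ × ℕ) (xs : ℕ → X) (m : ℕ) : Prop :=
  0 < m ∧ xs 0 = x ∧
  (∀ j, j + 1 < m → T (b j) = (xs (j + 1) : WithTop X)) ∧
  T (b (m - 1)) = ⊤ ∧
  ∀ j, j < m →
    (coord (Bool.xor ε (par (xs j))) (b j) =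
      (if j = 0 then 0 else coord (Bool.xor ε (par (xs j))) (b (j - 1)) + 1)) ∧
    cmpIns ε (xs j) (T (b j)) ∧
    ∀ v : ℕ × ℕ,
      coord (Bool.xor ε (par (xs j))) v = coord (Bool.xor ε (par (xs j))) (b j) →
      cmpIns ε (xs j) (T v) →
      coord (!(Bool.xor ε (par (xs j)))) (b j) ≤ coord (!(Bool.xor ε (par (xs j)))) v

/-- `InsResult T b xs m R` says `R` is the tableau obtained from `T` by the insertion
with bumped nodes `b` and bumped letters `xs`: `R (b k) = xs k` and `R` agrees with `T`
elsewhere. -/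
def InsResult [LinearOrder X] (T : ℕ × ℕ → WithTop X) (b : ℕ → ℕ × ℕ) (xs : ℕ → X)
    (m : ℕ) (R : ℕ × ℕ → WithTop X) : Prop :=
  (∀ k, k < m → R (b k) = (xs k : WithTop X)) ∧
  ∀ u : ℕ × ℕ, (∀ k, k < m → u ≠ b k) → R u = T u

/-- `ExtractSeq ε par T u c ys m` says `c 0, …, c (m-1)` is the unbumped node sequence
and `ys 0, …, ys (m-1)` the unbumped letter sequence for the `ε`-extraction at `u`:
`c 0 = u`, `ys 0 = T u`; at each step `c (j+1)` is the greatest node, in the row/column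
(according to `ε` plus the parity of `ys j`) preceding that of `c j`, whose entry is
`ε`-below `ys j`; the process stops upon reaching the first row/column. -/
def ExtractSeq [LinearOrder X] (ε : Bool) (par : X → Bool) (T : ℕ × ℕ → WithTop X)
    (u : ℕ × ℕ) (c : ℕ → ℕ × ℕ) (ys : ℕ → X) (m : ℕ) : Prop :=
  0 < m ∧ c 0 = u ∧ T u = (ys 0 : WithTop X) ∧
  (∀ j, j + 1 < m →
    0 < coord (Bool.xor ε (par (ys j))) (c j) ∧
    coord (Bool.xor ε (par (ys j))) (c (j + 1)) + 1 =
      coord (Bool.xor ε (par (ys j))) (c j) ∧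
    T (c (j + 1)) = (ys (j + 1) : WithTop X) ∧
    cmpExt ε (ys j) (T (c (j + 1))) ∧
    ∀ v : ℕ × ℕ,
      coord (Bool.xor ε (par (ys j))) v + 1 = coord (Bool.xor ε (par (ys j))) (c j) →
      cmpExt ε (ys j) (T v) →
      coord (!(Bool.xor ε (par (ys j)))) v ≤ coord (!(Bool.xor ε (par (ys j)))) (c (j + 1))) ∧
  coord (Bool.xor ε (par (ys (m - 1)))) (c (m - 1)) = 0

/-- `ExtResult T c ys m R` says `R` is the tableau obtained from `T` by the extraction
with unbumped nodes `c` and letters `ys`: each `c k` (`k ≥ 1`) receives `ys (k-1)`, the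
initial node `c 0` is emptied, and `R` agrees with `T` elsewhere. -/
def ExtResult [LinearOrder X] (T : ℕ × ℕ → WithTop X) (c : ℕ → ℕ × ℕ) (ys : ℕ → X)
    (m : ℕ) (R : ℕ × ℕ → WithTop X) : Prop :=
  (∀ k, 0 < k → k < m → R (c k) = (ys (k - 1) : WithTop X)) ∧
  (∀ v : ℕ × ℕ, (∀ k, k < m → v ≠ c k) → R v = T v) ∧
  ((∀ k, 0 < k → k < m → c 0 ≠ c k) → R (c 0) = ⊤)


lemma eq_of_coord_eq {δ : Bool} {u v : ℕ × ℕ} (h : coord δ u = coord δ v)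
    (h' : coord (!δ) u = coord (!δ) v) : u = v := by
  cases δ <;> simp only [coord, Bool.not_false, Bool.not_true, Bool.false_eq_true,
    ↓reduceIte] at h h' <;> exact Prod.ext ‹_› ‹_›

theorem rel_of_forall_rel_succ_of_lt_of_lt {α : Type*} {r : α → α → Prop}
    (hr : ∀ {a b c}, r a b → r b c → r a c) {f : ℕ → α} {m : ℕ}
    (h : ∀ k, k + 1 < m → r (f k) (f (k + 1))) {j k : ℕ} (hjk : j < k) (hk : k < m) :
    r (f j) (f k) := by
  induction k, hjk using Nat.le_induction with
  | base => exact h j hk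
  | succ k hjk ih => exact hr (ih (by omega)) (h k hk)

section Compare

variable [LinearOrder X] {ε : Bool}

lemma cmpIns_le {x : X} {v : WithTop X} (h : cmpIns ε x v) : (x : WithTop X) ≤ v := by
  cases ε
  exacts [le_of_lt h, h]

lemma cmpExt_le {y : X} {v : WithTop X} (h : cmpExt ε y v) : v ≤ (y : WithTop X) := by
  cases ε
  exacts [le_of_lt h, h]

lemma cmpIns_top (x : X) : cmpIns ε x ⊤ := by
  cases ε
  exacts [WithTop.coe_lt_top x, le_top]

lemma cmpExt_coe_iff {a y : X} : cmpExt ε y (a : WithTop X) ↔ cmpIns ε a (y : WithTop X) := by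
  cases ε <;> rfl

lemma cmpIns_trans {a b : X} {v : WithTop X} (hab : cmpIns ε a (b : WithTop X))
    (hbv : cmpIns ε b v) : cmpIns ε a v := by
  cases ε
  exacts [lt_trans (α := WithTop X) hab hbv, le_trans (α := WithTop X) hab hbv]

end Compare

namespace IsSStd

variable [LinearOrder X] {par : X → Bool} {T : ℕ × ℕ → WithTop X}

lemma le_of_coord (hT : IsSStd par T) (δ : Bool) {u v : ℕ × ℕ}
    (h : coord δ u = coord δ v) (h' : coord (!δ) u ≤ coord (!δ) v) : T u ≤ T v := by
  cases δ <;> simp only [coord, Bool.not_false, Bool.not_true, Bool.false_eq_true,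
    ↓reduceIte] at h h' <;> exact hT.1 u v (by omega) (by omega)

lemma par_eq_of_coord (hT : IsSStd par T) (δ : Bool) {u v : ℕ × ℕ} {a : X}
    (h : coord δ u = coord δ v) (h' : coord (!δ) u < coord (!δ) v)
    (hu : T u = a) (hv : T v = a) : par a = δ := by
  cases δ
  · exact hT.2.1 u v a h h' hu hv
  · exact hT.2.2 u v a h h' hu hv

lemma not_cmpExt_of_coord_lt (hT : IsSStd par T) (ε : Bool) {u w : ℕ × ℕ} {a : X}
    (hu : T u = a) (h : coord (ε ^^ par a) u = coord (ε ^^ par a) w)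
    (h' : coord (!(ε ^^ par a)) u < coord (!(ε ^^ par a)) w) : ¬ cmpExt ε a (T w) := by
  intro hcmp
  have hle : (a : WithTop X) ≤ T w := hu ▸ hT.le_of_coord _ h h'.le
  cases ε
  · exact not_lt_of_ge hle hcmp
  · simpa using hT.par_eq_of_coord _ h h' hu (le_antisymm hcmp hle)

lemma not_cmpIns_of_coord_lt (hT : IsSStd par T) (ε : Bool) {u w : ℕ × ℕ} {a : X}
    (hu : T u = a) (h : coord (ε ^^ par a) w = coord (ε ^^ par a) u)
    (h' : coord (!(ε ^^ par a)) w < coord (!(ε ^^ par a)) u) : ¬ cmpIns ε a (T w) := by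
  intro hcmp
  have hle : T w ≤ a := hu ▸ hT.le_of_coord _ h h'.le
  cases ε
  · exact not_lt_of_ge hle hcmp
  · simpa using hT.par_eq_of_coord _ h h' (le_antisymm hle hcmp) hu

lemma eq_top_of_coord_lt (hT : IsSStd par T) {u w : ℕ × ℕ} (hr : T (u.1 + 1, u.2) = ⊤)
    (hc : T (u.1, u.2 + 1) = ⊤) (δ : Bool) (h : coord δ u = coord δ w)
    (h' : coord (!δ) u < coord (!δ) w) : T w = ⊤ := by
  cases δ <;> simp only [coord, Bool.not_false, Bool.not_true, Bool.false_eq_true,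
    ↓reduceIte] at h h'
  · exact top_le_iff.mp (hc ▸ hT.1 _ w (by omega) (by omega))
  · exact top_le_iff.mp (hr ▸ hT.1 _ w (by omega) (by omega))

end IsSStd
namespace BumpSeq

variable [LinearOrder X] {ε : Bool} {par : X → Bool} {T R S : ℕ × ℕ → WithTop X} {x : X}
  {b c : ℕ → ℕ × ℕ} {xs ys : ℕ → X} {m m' : ℕ}

lemma cmpIns_succ (h : BumpSeq ε par T x b xs m) {k : ℕ} (hk : k + 1 < m) :
    cmpIns ε (xs k) (xs (k + 1)) :=
  h.2.2.1 k hk ▸ (h.2.2.2.2 k (by omega)).2.1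

lemma cmpIns_of_lt (h : BumpSeq ε par T x b xs m) {j k : ℕ} (hjk : j < k) (hk : k < m) :
    cmpIns ε (xs j) (xs k) :=
  rel_of_forall_rel_succ_of_lt_of_lt (r := fun a a' : X => cmpIns ε a a') cmpIns_trans
    (fun _ => h.cmpIns_succ) hjk hk

lemma letter_monotone (h : BumpSeq ε par T x b xs m) {j k : ℕ} (hjk : j ≤ k) (hk : k < m) :
    xs j ≤ xs k :=
  hjk.eq_or_lt.elim (fun e => e ▸ le_rfl)
    fun hjk => WithTop.coe_le_coe.mp (cmpIns_le (h.cmpIns_of_lt hjk hk))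

lemma coord_zero (h : BumpSeq ε par T x b xs m) : coord (ε ^^ par (xs 0)) (b 0) = 0 := by
  simpa using (h.2.2.2.2 0 h.1).1

lemma coord_succ (h : BumpSeq ε par T x b xs m) {k : ℕ} (hk : k + 1 < m) :
    coord (ε ^^ par (xs (k + 1))) (b (k + 1)) = coord (ε ^^ par (xs (k + 1))) (b k) + 1 := by
  simpa using (h.2.2.2.2 (k + 1) hk).1

lemma coord_eq_add_of_le (h : BumpSeq ε par T x b xs m) {i k : ℕ} (hik : i ≤ k)
    (hk : k + 1 < m) (hx : xs (k + 1) ≤ xs (i + 1)) :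
    coord (ε ^^ par (xs (i + 1))) (b (k + 1)) =
      coord (ε ^^ par (xs (i + 1))) (b i) + (k + 1 - i) := by
  induction k, hik using Nat.le_induction with
  | base => simpa using h.coord_succ hk
  | succ k hik ih =>
    have hstep := h.letter_monotone (Nat.le_succ (k + 1)) hk
    have hrun : xs (k + 1 + 1) = xs (i + 1) :=
      le_antisymm hx (h.letter_monotone (by omega) hk)
    have := h.coord_succ hk
    rw [hrun] at this
    rw [this, ih (by omega) (hstep.trans hx)]
    omega

lemma not_cmpExt_of_coord_lt (h : BumpSeq ε par T x b xs m) (hT : IsSStd par T)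
    (hR : InsResult T b xs m R) {i : ℕ} {w : ℕ × ℕ} (hi : i + 1 < m)
    (hw : coord (ε ^^ par (xs (i + 1))) (b i) = coord (ε ^^ par (xs (i + 1))) w)
    (hw' : coord (!(ε ^^ par (xs (i + 1)))) (b i) < coord (!(ε ^^ par (xs (i + 1)))) w) :
    ¬ cmpExt ε (xs (i + 1)) (R w) := by
  intro hcmp
  have hTb : T (b i) = xs (i + 1) := h.2.2.1 i hi
  by_cases hpath : ∃ k < m, w = b k
  · obtain ⟨k, hk, rfl⟩ := hpath
    rw [hR.1 k hk] at hcmp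
    rcases lt_trichotomy k i with hki | rfl | hik
    · refine hT.not_cmpExt_of_coord_lt ε hTb hw hw' ?_
      rw [h.2.2.1 k (by omega)]
      exact cmpExt_coe_iff.mpr (h.cmpIns_of_lt (by omega) hi)
    · exact lt_irrefl _ hw'
    · obtain ⟨k, rfl⟩ : ∃ k', k = k' + 1 := ⟨k - 1, by omega⟩
      have := h.coord_eq_add_of_le (by omega) hk (WithTop.coe_le_coe.mp (cmpExt_le hcmp))
      omega
  · push Not at hpath
    rw [hR.2 w hpath] at hcmp
    exact hT.not_cmpExt_of_coord_lt ε hTb hw hw' hcmp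

lemma extract_succ_eq (h : BumpSeq ε par T x b xs m) (hT : IsSStd par T)
    (hR : InsResult T b xs m R) {u : ℕ × ℕ} (hE : ExtractSeq ε par R u c ys m') {i j : ℕ}
    (hi : i + 1 < m) (hj : j + 1 < m') (hc : c j = b (i + 1)) (hy : ys j = xs (i + 1)) :
    c (j + 1) = b i ∧ ys (j + 1) = xs i := by
  obtain ⟨-, hline, hRc, hcmp, hmax⟩ := hE.2.2.2.1 j hj
  rw [hy, hc] at hline hmax
  rw [hy] at hcmp
  have hline' := h.coord_succ hi
  have hbi : cmpExt ε (xs (i + 1)) (R (b i)) := by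
    rw [hR.1 i (by omega)]
    exact cmpExt_coe_iff.mpr (h.cmpIns_succ hi)
  have hle := hmax (b i) (by omega) hbi
  have hge := mt (h.not_cmpExt_of_coord_lt hT hR hi (by omega)) (not_not.mpr hcmp)
  have hcb : c (j + 1) = b i :=
    eq_of_coord_eq (δ := ε ^^ par (xs (i + 1))) (by omega) (by omega)
  refine ⟨hcb, ?_⟩
  rw [hcb, hR.1 i (by omega)] at hRc
  exact (WithTop.coe_inj.mp hRc).symm

lemma extract_eq (h : BumpSeq ε par T x b xs m) (hT : IsSStd par T)
    (hR : InsResult T b xs m R) (hE : ExtractSeq ε par R (b (m - 1)) c ys m') :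
    ∀ i j, i + j + 1 = m → j < m' → c j = b i ∧ ys j = xs i := by
  intro i j
  induction j generalizing i with
  | zero =>
    intro hi _
    obtain rfl : i = m - 1 := by omega
    refine ⟨hE.2.1, ?_⟩
    have hy := hE.2.2.1
    rw [hR.1 _ (by omega)] at hy
    exact (WithTop.coe_inj.mp hy).symm
  | succ j ih =>
    intro hi hj
    obtain ⟨hc, hy⟩ := ih (i + 1) (by omega) (by omega)
    exact h.extract_succ_eq hT hR hE (by omega) hj hc hy

lemma extract_length_eq (h : BumpSeq ε par T x b xs m) (hT : IsSStd par T)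
    (hR : InsResult T b xs m R) (hE : ExtractSeq ε par R (b (m - 1)) c ys m') : m' = m := by
  have corr := h.extract_eq hT hR hE
  have := h.1
  have := hE.1
  -- A shorter extraction would stop off the first line, a longer one would leave it.
  rcases lt_trichotomy m' m with hlt | heq | hgt
  · obtain ⟨i, rfl⟩ : ∃ i, m = m' + i + 1 := ⟨m - m' - 1, by omega⟩
    obtain ⟨hc, hy⟩ := corr (i + 1) (m' - 1) (by omega) (by omega)
    have hfin := hE.2.2.2.2
    rw [hc, hy] at hfin
    have := h.coord_succ (k := i) (by omega)
    omega
  · exact heq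
  · obtain ⟨hc, hy⟩ := corr 0 (m - 1) (by omega) (by omega)
    have hpos := (hE.2.2.2.1 (m - 1) (by omega)).1
    rw [hc, hy] at hpos
    have := h.coord_zero
    omega

theorem extResult_eq (h : BumpSeq ε par T x b xs m) (hT : IsSStd par T)
    (hR : InsResult T b xs m R) (hE : ExtractSeq ε par R (b (m - 1)) c ys m')
    (hS : ExtResult R c ys m' S) : S = T := by
  obtain rfl := (h.extract_length_eq hT hR hE).symm
  have corr := h.extract_eq hT hR hE
  have hc0 : S (c 0) = ⊤ := hS.2.2 fun j _ hj e => by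
    have hTb := h.2.2.1 (m - 1 - j) (by omega)
    rw [← (corr _ j (by omega) hj).1, ← e, hE.2.1, h.2.2.2.1] at hTb
    exact WithTop.top_ne_coe hTb
  funext v
  by_cases hpath : ∃ k < m, v = b k
  · obtain ⟨k, hk, rfl⟩ := hpath
    rcases Nat.lt_or_ge (k + 1) m with hk1 | hk1
    · obtain ⟨j, rfl⟩ : ∃ j, m = k + j + 2 := ⟨m - k - 2, by omega⟩
      have hc := (corr k (j + 1) (by omega) (by omega)).1
      rw [← hc, hS.1 (j + 1) (by omega) (by omega), Nat.add_sub_cancel,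
        (corr (k + 1) j (by omega) (by omega)).2, hc, h.2.2.1 k hk1]
    · obtain rfl : k = m - 1 := by omega
      rw [← hE.2.1, hc0, hE.2.1, h.2.2.2.1]
  · push Not at hpath
    have hoff : ∀ j < m, v ≠ c j := fun j hj e =>
      hpath (m - 1 - j) (by omega) (e.trans (corr _ j (by omega) hj).1)
    rw [hS.2.1 v hoff, hR.2 v hpath]

end BumpSeq
namespace ExtractSeq

variable [LinearOrder X] {ε : Bool} {par : X → Bool} {T R S : ℕ × ℕ → WithTop X}
  {u : ℕ × ℕ} {b c : ℕ → ℕ × ℕ} {xs ys : ℕ → X} {m m' : ℕ}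

lemma apply_eq (h : ExtractSeq ε par T u c ys m) {k : ℕ} (hk : k < m) : T (c k) = ys k := by
  cases k with
  | zero => exact h.2.1 ▸ h.2.2.1
  | succ k => exact (h.2.2.2.1 k hk).2.2.1

lemma cmpIns_succ (h : ExtractSeq ε par T u c ys m) {k : ℕ} (hk : k + 1 < m) :
    cmpIns ε (ys (k + 1)) (ys k) :=
  cmpExt_coe_iff.mp (h.apply_eq hk ▸ (h.2.2.2.1 k hk).2.2.2.1)

lemma cmpIns_of_lt (h : ExtractSeq ε par T u c ys m) {j k : ℕ} (hjk : j < k) (hk : k < m) :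
    cmpIns ε (ys k) (ys j) :=
  rel_of_forall_rel_succ_of_lt_of_lt (r := fun a a' : X => cmpIns ε a' a)
    (fun h₁ h₂ => cmpIns_trans h₂ h₁) (fun _ => h.cmpIns_succ) hjk hk

lemma letter_antitone (h : ExtractSeq ε par T u c ys m) {j k : ℕ} (hjk : j ≤ k) (hk : k < m) :
    ys k ≤ ys j :=
  hjk.eq_or_lt.elim (fun e => e ▸ le_rfl)
    fun hjk => WithTop.coe_le_coe.mp (cmpIns_le (h.cmpIns_of_lt hjk hk))

lemma coord_succ (h : ExtractSeq ε par T u c ys m) {k : ℕ} (hk : k + 1 < m) :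
    coord (ε ^^ par (ys k)) (c (k + 1)) + 1 = coord (ε ^^ par (ys k)) (c k) :=
  (h.2.2.2.1 k hk).2.1

lemma coord_add_eq_of_le (h : ExtractSeq ε par T u c ys m) {i k : ℕ} (hik : i ≤ k)
    (hk : k + 1 < m) (hy : ys i ≤ ys k) :
    coord (ε ^^ par (ys i)) (c (k + 1)) + (k + 1 - i) = coord (ε ^^ par (ys i)) (c i) := by
  induction k, hik using Nat.le_induction with
  | base => simpa using h.coord_succ hk
  | succ k hik ih =>
    have hstep := h.letter_antitone (Nat.le_succ k) (by omega)
    have hrun : ys (k + 1) = ys i := le_antisymm (h.letter_antitone (by omega) (by omega)) hy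
    have := h.coord_succ hk
    rw [hrun] at this
    rw [← ih (by omega) (hy.trans hstep)]
    omega

lemma head_ne (h : ExtractSeq ε par T u c ys m) {k : ℕ} (hk₀ : 0 < k) (hk : k < m) :
    c 0 ≠ c k := by
  intro e
  obtain ⟨k, rfl⟩ : ∃ k', k = k' + 1 := ⟨k - 1, by omega⟩
  have hy : ys 0 = ys (k + 1) :=
    WithTop.coe_inj.mp (by rw [← h.apply_eq hk, ← e, h.apply_eq h.1])
  have := h.coord_add_eq_of_le (Nat.zero_le k) hk
    (hy.trans_le (h.letter_antitone (Nat.le_succ k) hk))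
  rw [← e] at this
  omega

lemma cmpIns_extResult (h : ExtractSeq ε par T u c ys m) (hS : ExtResult T c ys m S) {i : ℕ}
    (hi : i < m) : cmpIns ε (ys i) (S (c i)) := by
  cases i with
  | zero => exact hS.2.2 (fun _ => h.head_ne) ▸ cmpIns_top _
  | succ i =>
    rw [hS.1 (i + 1) (by omega) hi, Nat.add_sub_cancel]
    exact h.cmpIns_succ hi

lemma not_cmpIns_of_coord_lt (h : ExtractSeq ε par T u c ys m) (hT : IsSStd par T)
    (hr : T (u.1 + 1, u.2) = ⊤) (hc : T (u.1, u.2 + 1) = ⊤) (hS : ExtResult T c ys m S)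
    {i : ℕ} {v : ℕ × ℕ} (hi : i < m)
    (hv : coord (ε ^^ par (ys i)) v = coord (ε ^^ par (ys i)) (c i))
    (hv' : coord (!(ε ^^ par (ys i))) v < coord (!(ε ^^ par (ys i))) (c i)) :
    ¬ cmpIns ε (ys i) (S v) := by
  intro hcmp
  have hTc := h.apply_eq hi
  by_cases hpath : ∃ k < m, v = c k
  · obtain ⟨k, hk, rfl⟩ := hpath
    cases k with
    | zero =>
      rw [h.2.1] at hv hv'
      have := hT.eq_top_of_coord_lt hr hc _ hv hv'
      rw [hTc] at this
      exact WithTop.coe_ne_top this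
    | succ k =>
      rw [hS.1 (k + 1) (by omega) hk, Nat.add_sub_cancel] at hcmp
      rcases lt_trichotomy (k + 1) i with hki | rfl | hik
      · refine hT.not_cmpIns_of_coord_lt ε hTc hv hv' ?_
        rw [h.apply_eq hk]
        exact h.cmpIns_of_lt hki hi
      · exact lt_irrefl _ hv'
      · have := h.coord_add_eq_of_le (by omega) hk (WithTop.coe_le_coe.mp (cmpIns_le hcmp))
        omega
  · push Not at hpath
    rw [hS.2.1 v hpath] at hcmp
    exact hT.not_cmpIns_of_coord_lt ε hTc hv hv' hcmp

lemma insert_eq_of_coord_eq (h : ExtractSeq ε par T u c ys m) (hT : IsSStd par T)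
    (hr : T (u.1 + 1, u.2) = ⊤) (hc : T (u.1, u.2 + 1) = ⊤) (hS : ExtResult T c ys m S)
    {y : X} (hB : BumpSeq ε par S y b xs m') {i j : ℕ} (hi : i < m) (hj : j < m')
    (hx : xs j = ys i) (hb : coord (ε ^^ par (ys i)) (b j) = coord (ε ^^ par (ys i)) (c i)) :
    b j = c i := by
  obtain ⟨-, hcmp, hmin⟩ := hB.2.2.2.2 j hj
  rw [hx] at hcmp hmin
  have hle := hmin (c i) hb.symm (h.cmpIns_extResult hS hi)
  have hge := mt (h.not_cmpIns_of_coord_lt hT hr hc hS hi hb) (not_not.mpr hcmp)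
  exact eq_of_coord_eq hb (by omega)

lemma insert_eq (h : ExtractSeq ε par T u c ys m) (hT : IsSStd par T)
    (hr : T (u.1 + 1, u.2) = ⊤) (hc : T (u.1, u.2 + 1) = ⊤) (hS : ExtResult T c ys m S)
    (hB : BumpSeq ε par S (ys (m - 1)) b xs m') :
    ∀ i j, i + j + 1 = m → j < m' → b j = c i ∧ xs j = ys i := by
  intro i j
  induction j generalizing i with
  | zero =>
    intro hi hj
    obtain rfl : i = m - 1 := by omega
    have hx : xs 0 = ys (m - 1) := hB.2.1
    refine ⟨h.insert_eq_of_coord_eq hT hr hc hS hB (by omega) hj hx ?_, hx⟩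
    rw [h.2.2.2.2, ← hx]
    exact hB.coord_zero
  | succ j ih =>
    intro hi hj
    obtain ⟨hb, -⟩ := ih (i + 1) (by omega) (by omega)
    have hx : xs (j + 1) = ys i := by
      have hSb := hB.2.2.1 j hj
      rw [hb, hS.1 (i + 1) (by omega) (by omega), Nat.add_sub_cancel] at hSb
      exact (WithTop.coe_inj.mp hSb).symm
    refine ⟨h.insert_eq_of_coord_eq hT hr hc hS hB (by omega) hj hx ?_, hx⟩
    have hline := hB.coord_succ hj
    have hline' := h.coord_succ (k := i) (by omega)
    rw [hx, hb] at hline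
    omega

lemma insert_length_eq (h : ExtractSeq ε par T u c ys m) (hT : IsSStd par T)
    (hr : T (u.1 + 1, u.2) = ⊤) (hc : T (u.1, u.2 + 1) = ⊤) (hS : ExtResult T c ys m S)
    (hB : BumpSeq ε par S (ys (m - 1)) b xs m') : m' = m := by
  have corr := h.insert_eq hT hr hc hS hB
  have := h.1
  have := hB.1
  -- A shorter insertion would stop at a filled node, a longer one would bump the emptied `c 0`.
  rcases lt_trichotomy m' m with hlt | heq | hgt
  · have hSb := hB.2.2.2.1
    rw [(corr (m - m') (m' - 1) (by omega) (by omega)).1, hS.1 _ (by omega) (by omega)] at hSb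
    exact (WithTop.coe_ne_top hSb).elim
  · exact heq
  · have hSb := hB.2.2.1 (m - 1) (by omega)
    rw [(corr 0 (m - 1) (by omega) (by omega)).1, hS.2.2 fun _ => h.head_ne] at hSb
    exact (WithTop.top_ne_coe hSb).elim

theorem insResult_eq (h : ExtractSeq ε par T u c ys m) (hT : IsSStd par T)
    (hr : T (u.1 + 1, u.2) = ⊤) (hc : T (u.1, u.2 + 1) = ⊤) (hS : ExtResult T c ys m S)
    (hB : BumpSeq ε par S (ys (m - 1)) b xs m') (hR : InsResult S b xs m' R) : R = T := by
  obtain rfl := h.insert_length_eq hT hr hc hS hB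
  have corr := h.insert_eq hT hr hc hS hB
  funext v
  by_cases hpath : ∃ k < m', v = c k
  · obtain ⟨k, hk, rfl⟩ := hpath
    obtain ⟨hb, hx⟩ := corr k (m' - 1 - k) (by omega) (by omega)
    rw [← hb, hR.1 _ (by omega), hx, hb, h.apply_eq hk]
  · push Not at hpath
    have hoff : ∀ j < m', v ≠ b j := fun j hj e =>
      hpath (m' - 1 - j) (by omega) (e.trans (corr _ j (by omega) hj).1)
    rw [hR.2 v hoff, hS.2.1 v hpath]

end ExtractSeq

/-- `ε`-insertion and `ε`-extraction are mutually inverse: extracting at the added node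
undoes an insertion, and inserting the extracted letter undoes an extraction. -/
theorem stmt10 [LinearOrder X] (ε : Bool) (par : X → Bool) (T : ℕ × ℕ → WithTop X)
    (hT : IsSStd par T) :
    (∀ (x : X) (b : ℕ → ℕ × ℕ) (xs : ℕ → X) (m : ℕ) (R : ℕ × ℕ → WithTop X)
       (c : ℕ → ℕ × ℕ) (ys : ℕ → X) (m' : ℕ) (S : ℕ × ℕ → WithTop X),
       BumpSeq ε par T x b xs m → InsResult T b xs m R →
       ExtractSeq ε par R (b (m - 1)) c ys m' → ExtResult R c ys m' S →
       S = T) ∧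
    (∀ (u : ℕ × ℕ) (c : ℕ → ℕ × ℕ) (ys : ℕ → X) (m : ℕ) (S : ℕ × ℕ → WithTop X)
       (b : ℕ → ℕ × ℕ) (xs : ℕ → X) (m' : ℕ) (R : ℕ × ℕ → WithTop X),
       T u ≠ ⊤ → T (u.1 + 1, u.2) = ⊤ → T (u.1, u.2 + 1) = ⊤ →
       ExtractSeq ε par T u c ys m → ExtResult T c ys m S →
       BumpSeq ε par S (ys (m - 1)) b xs m' → InsResult S b xs m' R →
       R = T) :=
  ⟨fun _ _ _ _ _ _ _ _ _ hB hR hE hS => hB.extResult_eq hT hR hE hS,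
    fun _ _ _ _ _ _ _ _ _ _ hr hc hE hS hB hR => hE.insResult_eq hT hr hc hS hB hR⟩

end SuperRSK
end

section
/- For a semistandard (X,λ)-tableau T: (1) (T ←ε x)'* = (T'* ←ε x*) for every x ∈ X, with the bumped node sequence of the right side being the transposes of the left side's; (2) (T →ε u)'* = (T'* →ε u') for every removable node u of [λ], with the unbumped node sequence similarly transposed. -/
namespace SuperRSK

variable {X Y : Type*}

/-!
Transposing a node exchanges its row and column coordinates, i.e. replaces the
selector `δ` of `coord δ` by `!δ`, while flipping every parity replaces `ε + par a`
by its negation. The two effects cancel, and the order on letters (hence every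
`ε`-comparison) is unchanged, so each defining clause of an insertion or extraction
in `T` is literally the corresponding clause in `T'*`.
-/

@[simp]
lemma coord_swap (δ : Bool) (u : ℕ × ℕ) : coord δ u.swap = coord (!δ) u := by
  cases δ <;> rfl

section Transpose

variable [LinearOrder X] {ε : Bool} {par : X → Bool} {T R : ℕ × ℕ → WithTop X}

theorem BumpSeq.transpose {x : X} {b : ℕ → ℕ × ℕ} {xs : ℕ → X} {m : ℕ}
    (h : BumpSeq ε par T x b xs m) :
    BumpSeq ε (fun a => !par a) (fun u => T u.swap) x (fun j => (b j).swap) xs m := by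
  obtain ⟨hm, hx, hbumped, hempty, hstep⟩ := h
  refine ⟨hm, hx, hbumped, hempty, fun j hj => ?_⟩
  obtain ⟨hline, hcmp, hleast⟩ := hstep j hj
  refine ⟨by simpa using hline, hcmp, fun v hv hcmpv => ?_⟩
  simpa using hleast v.swap (by simpa using hv) hcmpv

theorem ExtractSeq.transpose {u : ℕ × ℕ} {c : ℕ → ℕ × ℕ} {ys : ℕ → X} {m : ℕ}
    (h : ExtractSeq ε par T u c ys m) :
    ExtractSeq ε (fun a => !par a) (fun v => T v.swap) u.swap (fun j => (c j).swap) ys m := by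
  obtain ⟨hm, hc, hu, hstep, hlast⟩ := h
  refine ⟨hm, congrArg Prod.swap hc, hu, fun j hj => ?_, by simpa using hlast⟩
  obtain ⟨hpos, hline, hunbumped, hcmp, hgreatest⟩ := hstep j hj
  refine ⟨by simpa using hpos, by simpa using hline, hunbumped, hcmp, fun v hv hcmpv => ?_⟩
  simpa using hgreatest v.swap (by simpa using hv) hcmpv

theorem InsResult.comp_equiv (e : ℕ × ℕ ≃ ℕ × ℕ) {b : ℕ → ℕ × ℕ} {xs : ℕ → X} {m : ℕ}
    (h : InsResult T b xs m R) : InsResult (T ∘ e) (e.symm ∘ b) xs m (R ∘ e) := by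
  obtain ⟨hbumped, hrest⟩ := h
  refine ⟨fun k hk => by simpa using hbumped k hk, fun u hu => hrest (e u) fun k hk hub => ?_⟩
  exact hu k hk (by simp [← hub])

theorem ExtResult.comp_equiv (e : ℕ × ℕ ≃ ℕ × ℕ) {c : ℕ → ℕ × ℕ} {ys : ℕ → X} {m : ℕ}
    (h : ExtResult T c ys m R) : ExtResult (T ∘ e) (e.symm ∘ c) ys m (R ∘ e) := by
  obtain ⟨hunbumped, hrest, hemptied⟩ := h
  refine ⟨fun k hk hkm => by simpa using hunbumped k hk hkm,
    fun v hv => hrest (e v) fun k hk hvc => hv k hk (by simp [← hvc]), fun hne => ?_⟩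
  simpa using hemptied fun k hk hkm hck => hne k hk hkm (by simp [hck])

end Transpose

theorem stmt12_general [LinearOrder X] (ε : Bool) (par : X → Bool) (T : ℕ × ℕ → WithTop X) :
    (∀ (x : X) (b : ℕ → ℕ × ℕ) (xs : ℕ → X) (m : ℕ),
       BumpSeq ε par T x b xs m →
       BumpSeq ε (fun a => !par a) (fun u => T (u.2, u.1)) x
         (fun j => ((b j).2, (b j).1)) xs m ∧
       ∀ R : ℕ × ℕ → WithTop X, InsResult T b xs m R →
         InsResult (fun u => T (u.2, u.1)) (fun j => ((b j).2, (b j).1)) xs m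
           (fun u => R (u.2, u.1))) ∧
    (∀ (u : ℕ × ℕ) (c : ℕ → ℕ × ℕ) (ys : ℕ → X) (m : ℕ),
       ExtractSeq ε par T u c ys m →
       ExtractSeq ε (fun a => !par a) (fun v => T (v.2, v.1)) (u.2, u.1)
         (fun j => ((c j).2, (c j).1)) ys m ∧
       ∀ S : ℕ × ℕ → WithTop X, ExtResult T c ys m S →
         ExtResult (fun v => T (v.2, v.1)) (fun j => ((c j).2, (c j).1)) ys m
           (fun v => S (v.2, v.1))) :=
  ⟨fun _ _ _ _ hbump => ⟨hbump.transpose, fun _ hR => hR.comp_equiv (Equiv.prodComm ℕ ℕ)⟩,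
    fun _ _ _ _ hext => ⟨hext.transpose, fun _ hS => hS.comp_equiv (Equiv.prodComm ℕ ℕ)⟩⟩

/-- For a semistandard tableau `T`, the dual conjugate (transpose with all parities
flipped; the dual order agrees with the original) intertwines `ε`-insertion and
`ε`-extraction, transposing the bumped/unbumped node sequences. -/
theorem stmt12 [LinearOrder X] (ε : Bool) (par : X → Bool) (T : ℕ × ℕ → WithTop X)
    (hT : IsSStd par T) :
    (∀ (x : X) (b : ℕ → ℕ × ℕ) (xs : ℕ → X) (m : ℕ),
       BumpSeq ε par T x b xs m →
       BumpSeq ε (fun a => !par a) (fun u => T (u.2, u.1)) x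
         (fun j => ((b j).2, (b j).1)) xs m ∧
       ∀ R : ℕ × ℕ → WithTop X, InsResult T b xs m R →
         InsResult (fun u => T (u.2, u.1)) (fun j => ((b j).2, (b j).1)) xs m
           (fun u => R (u.2, u.1))) ∧
    (∀ (u : ℕ × ℕ) (c : ℕ → ℕ × ℕ) (ys : ℕ → X) (m : ℕ),
       ExtractSeq ε par T u c ys m →
       ExtractSeq ε (fun a => !par a) (fun v => T (v.2, v.1)) (u.2, u.1)
         (fun j => ((c j).2, (c j).1)) ys m ∧
       ∀ S : ℕ × ℕ → WithTop X, ExtResult T c ys m S →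
         ExtResult (fun v => T (v.2, v.1)) (fun j => ((c j).2, (c j).1)) ys m
           (fun v => S (v.2, v.1))) :=
  stmt12_general ε par T

end SuperRSK
end
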